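/- arXiv:1411.6667 — 5 statements merged into one kernel-verified Lean document; each statement's English description precedes it below -/
import Mathlib

section
/- There exist absolute constants c > 0 and ε₀ > 0 such that for every ε with 0 < ε < ε₀ and for infinitely many block lengths N, there is a binary code C ⊆ {0,1}^N with |C| ≥ 2^{(1 − c·√ε·log₂(1/ε))·N} that can be corrected from an ε fraction of worst-case deletions, i.e., every binary string of length ⌈(1−ε)N⌉ is a subsequence of at most one codeword of C. (Combinatorial content of the paper's Theorem 4.1: binary codes of rate 1 − Õ(√ε) correcting an ε fraction of deletions.) -/
/-!
Gilbert–Varshamov argument. Call two words confusable if they share a subsequence of length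
`ℓ = ⌈(1 - ε) N⌉`. A maximal code without confusable pairs dominates `{0,1}^N`, so
`2^N ≤ |C| · B` where `B` bounds the number of words confusable with a fixed one. Such a word is
determined by where the common subsequence sits in both words and by its remaining `N - ℓ`
symbols, so `B ≤ C(N, ℓ)² 2^(N-ℓ)`. With `k = N - ℓ ≤ ε N`, the estimates
`C(N, k) ≤ e^k (N/k)^k` and `x ≤ e^(2√x)` give `B ≤ e^(7√(kN)) ≤ e^(7√ε N)`, and
`log (1/ε) ≥ 1` for `ε < 1/e` turns this into `B ≤ 2^(7 √ε log₂(1/ε) N)`.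
-/

/-- `s` (of length `ℓ`) is a subsequence of `t` (of length `m`): there are indices
`i₁ < ⋯ < i_ℓ` with `t (i_j) = s j` for all `j`. -/
def IsSubseq {α : Type*} {ℓ m : ℕ} (s : Fin ℓ → α) (t : Fin m → α) : Prop :=
  ∃ f : Fin ℓ → Fin m, StrictMono f ∧ ∀ j, t (f j) = s j

open Finset

open Classical in
theorem exists_independent_card_le_mul {β : Type*} [Fintype β] (R : β → β → Prop)
    (hrefl : ∀ u, R u u) (hsymm : ∀ u v, R u v → R v u) (D : ℕ)
    (hD : ∀ u, #{v | R u v} ≤ D) :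
    ∃ C : Finset β, (∀ u ∈ C, ∀ v ∈ C, R u v → u = v) ∧ Fintype.card β ≤ #C * D := by
  let Independent (C : Finset β) : Prop := ∀ u ∈ C, ∀ v ∈ C, R u v → u = v
  obtain ⟨C, hC, hmax⟩ := exists_max_image {C : Finset β | Independent C} card
    ⟨∅, by simp [Independent]⟩
  replace hC : Independent C := (mem_filter.1 hC).2
  refine ⟨C, hC, ?_⟩
  have hcover : (univ : Finset β) ⊆ C.biUnion fun u => {v | R u v} := by
    intro x _
    simp only [mem_biUnion, mem_filter, mem_univ, true_and]
    by_contra! hx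
    have hxC : x ∉ C := fun h => hx x h (hrefl x)
    have hins : Independent (insert x C) := by
      intro u hu v hv huv
      rcases mem_insert.1 hu with rfl | huC <;> rcases mem_insert.1 hv with rfl | hvC
      · rfl
      · exact absurd (hsymm _ _ huv) (hx v hvC)
      · exact absurd huv (hx u huC)
      · exact hC u huC v hvC huv
    have := hmax _ (mem_filter.2 ⟨mem_univ _, hins⟩)
    rw [card_insert_of_notMem hxC] at this
    omega
  calc Fintype.card β = #(univ : Finset β) := card_univ.symm
    _ ≤ #(C.biUnion fun u => {v | R u v}) := card_le_card hcover
    _ ≤ #C * D := card_biUnion_le_card_mul _ _ _ fun u _ => hD u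

theorem card_strictMono_le (ℓ m : ℕ) : #{f : Fin ℓ → Fin m | StrictMono f} ≤ m.choose ℓ := by
  calc #{f : Fin ℓ → Fin m | StrictMono f} ≤ #(powersetCard ℓ (univ : Finset (Fin m))) := by
        refine card_le_card_of_injOn (fun f => univ.image f) (fun f hf => ?_)
          fun f hf g hg hfg => ?_
        · simp_all [card_image_of_injective _ (mem_filter.1 hf).2.injective]
        · simp only [coe_filter, Set.mem_ofPred_eq, mem_univ, true_and] at hf hg
          rw [← hf.range_inj hg]
          simpa [Set.ext_iff, Finset.ext_iff] using hfg
    _ = m.choose ℓ := by simp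

theorem card_extensions_le {ι κ α : Type*} [Fintype ι] [Fintype κ] [DecidableEq κ]
    [Fintype α] [DecidableEq α] {g : ι → κ} (hg : Function.Injective g) (c : ι → α) :
    #{v : κ → α | ∀ i, v (g i) = c i} ≤
      Fintype.card α ^ (Fintype.card κ - Fintype.card ι) := by
  calc #{v : κ → α | ∀ i, v (g i) = c i}
      ≤ #(univ : Finset ({k // k ∉ Set.range g} → α)) := by
        refine card_le_card_of_injOn (fun v k => v k) (fun _ _ => mem_univ _)
          fun v hv w hw hvw => ?_
        simp only [coe_filter, Set.mem_ofPred_eq, mem_univ, true_and] at hv hw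
        funext k
        by_cases hk : k ∈ Set.range g
        · obtain ⟨i, rfl⟩ := hk
          rw [hv, hw]
        · exact congrFun hvw ⟨k, hk⟩
    _ = Fintype.card α ^ (Fintype.card κ - Fintype.card ι) := by
        rw [card_univ, Fintype.card_fun, Fintype.card_subtype_compl,
          Set.card_range_of_injective hg]

def Confusable {α : Type*} {m n : ℕ} (ℓ : ℕ) (u : Fin m → α) (v : Fin n → α) : Prop :=
  ∃ s : Fin ℓ → α, IsSubseq s u ∧ IsSubseq s v

section Confusable

variable {α : Type*} {ℓ m n : ℕ}

theorem Confusable.symm {u : Fin m → α} {v : Fin n → α} (h : Confusable ℓ u v) :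
    Confusable ℓ v u :=
  let ⟨s, hu, hv⟩ := h; ⟨s, hv, hu⟩

theorem confusable_self (hℓ : ℓ ≤ n) (u : Fin n → α) : Confusable ℓ u u :=
  ⟨u ∘ Fin.castLE hℓ, ⟨_, Fin.strictMono_castLE hℓ, fun _ => rfl⟩,
    ⟨_, Fin.strictMono_castLE hℓ, fun _ => rfl⟩⟩

theorem confusable_iff {u : Fin m → α} {v : Fin n → α} :
    Confusable ℓ u v ↔
      ∃ f g : Fin ℓ → _, StrictMono f ∧ StrictMono g ∧ ∀ j, v (g j) = u (f j) := by
  constructor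
  · rintro ⟨s, ⟨f, hf, hfs⟩, ⟨g, hg, hgs⟩⟩
    exact ⟨f, g, hf, hg, fun j => (hgs j).trans (hfs j).symm⟩
  · rintro ⟨f, g, hf, hg, hfg⟩
    exact ⟨u ∘ f, ⟨f, hf, fun _ => rfl⟩, ⟨g, hg, hfg⟩⟩

open Classical in
theorem card_confusable_le [Fintype α] (u : Fin m → α) :
    #{v : Fin n → α | Confusable ℓ u v} ≤
      m.choose ℓ * n.choose ℓ * Fintype.card α ^ (n - ℓ) := by
  let Mono (k : ℕ) : Finset (Fin ℓ → Fin k) := {f | StrictMono f}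
  have hcover : ({v : Fin n → α | Confusable ℓ u v} : Finset _) ⊆
      (Mono m ×ˢ Mono n).biUnion fun p => {v : Fin n → α | ∀ j, v (p.2 j) = u (p.1 j)} := by
    intro v hv
    obtain ⟨f, g, hf, hg, hfg⟩ := confusable_iff.1 (mem_filter.1 hv).2
    exact mem_biUnion.2 ⟨(f, g), by simp [Mono, hf, hg], by simpa using hfg⟩
  calc #{v : Fin n → α | Confusable ℓ u v}
      ≤ #(Mono m ×ˢ Mono n) * Fintype.card α ^ (n - ℓ) := by
        refine (card_le_card hcover).trans (card_biUnion_le_card_mul _ _ _ fun p hp => ?_)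
        simpa using card_extensions_le (mem_filter.1 (mem_product.1 hp).2).2.injective
          (u ∘ p.1)
    _ ≤ m.choose ℓ * n.choose ℓ * Fintype.card α ^ (n - ℓ) := by
        rw [card_product]
        gcongr <;> exact card_strictMono_le _ _

theorem exists_deletion_code [Fintype α] (hℓ : ℓ ≤ n) :
    ∃ C : Finset (Fin n → α),
      (∀ s : Fin ℓ → α, ∀ u ∈ C, ∀ v ∈ C, IsSubseq s u → IsSubseq s v → u = v) ∧
      Fintype.card α ^ n ≤ #C * (n.choose ℓ ^ 2 * Fintype.card α ^ (n - ℓ)) := by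
  obtain ⟨C, hC, hcard⟩ := exists_independent_card_le_mul (Confusable (n := n) ℓ)
    (confusable_self hℓ) (fun _ _ => Confusable.symm) (n.choose ℓ ^ 2 * Fintype.card α ^ (n - ℓ))
    fun u => (card_confusable_le u).trans_eq (by ring)
  refine ⟨C, fun s u hu v hv hsu hsv => hC u hu v hv ⟨s, hsu, hsv⟩, ?_⟩
  simpa using hcard

end Confusable

open Real Nat

theorem le_exp_two_mul_sqrt {x : ℝ} (hx : 0 ≤ x) : x ≤ exp (2 * √x) := by
  have := quadratic_le_exp_of_nonneg (by positivity : 0 ≤ 2 * √x)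
  nlinarith [sq_sqrt hx, sqrt_nonneg x]

theorem choose_le_exp_add_sqrt (N k : ℕ) : (N.choose k : ℝ) ≤ exp (k + 2 * √(k * N)) := by
  rcases Nat.eq_zero_or_pos k with rfl | hk
  · simp
  have hk' : (0 : ℝ) < k := by exact_mod_cast hk
  have hsqrt : (k : ℝ) * √(N / k) = √(k * N) := by
    rw [show (k : ℝ) * N = k ^ 2 * (N / k) by field_simp, sqrt_mul (sq_nonneg _),
      sqrt_sq hk'.le]
  calc (N.choose k : ℝ) ≤ N ^ k / k ! := choose_le_pow_div k N
    _ = (N / k) ^ k * (k ^ k / k !) := by rw [div_pow]; field_simp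
    _ ≤ exp (2 * √(N / k)) ^ k * exp k := by
        gcongr
        · exact le_exp_two_mul_sqrt (by positivity)
        · exact pow_div_factorial_le_exp _ k.cast_nonneg k
    _ = exp (k + 2 * √(k * N)) := by
        rw [← exp_nat_mul, ← exp_add, ← hsqrt]
        ring_nf

theorem choose_sq_mul_two_pow_le {N k : ℕ} (hk : k ≤ N) :
    (N.choose k : ℝ) ^ 2 * 2 ^ k ≤ exp (7 * √(k * N)) := by
  have htwo : (2 : ℝ) ^ k ≤ exp k := by
    rw [← mul_one (k : ℝ), exp_nat_mul]
    gcongr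
    linarith [add_one_le_exp 1]
  have hk_le : (k : ℝ) ≤ √(k * N) :=
    le_sqrt_of_sq_le (by rw [sq]; gcongr)
  calc (N.choose k : ℝ) ^ 2 * 2 ^ k ≤ exp (k + 2 * √(k * N)) ^ 2 * exp k := by
        gcongr
        exact choose_le_exp_add_sqrt N k
    _ = exp (3 * k + 4 * √(k * N)) := by
        rw [sq, ← exp_add, ← exp_add]
        ring_nf
    _ ≤ exp (7 * √(k * N)) := exp_le_exp.2 (by linarith)

theorem choose_sq_mul_two_pow_le_two_rpow {N k : ℕ} {ε : ℝ} (hε : 0 < ε) (hε₀ : ε < exp (-1))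
    (hkN : k ≤ N) (hk : (k : ℝ) ≤ ε * N) :
    (N.choose k : ℝ) ^ 2 * 2 ^ k ≤ 2 ^ (7 * √ε * logb 2 (1 / ε) * N) := by
  have hlog : 1 ≤ log (1 / ε) := by
    rw [one_div, log_inv, le_neg, ← log_exp (-1)]
    exact (log_lt_log hε hε₀).le
  have hsqrt : √(k * N) ≤ √ε * N :=
    calc √(k * N) ≤ √(ε * N * N) := sqrt_le_sqrt (by nlinarith [N.cast_nonneg (α := ℝ)])
      _ = √ε * N := by rw [mul_assoc, sqrt_mul hε.le, sqrt_mul_self N.cast_nonneg]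
  calc (N.choose k : ℝ) ^ 2 * 2 ^ k ≤ exp (7 * √(k * N)) := choose_sq_mul_two_pow_le hkN
    _ ≤ exp (7 * √ε * log (1 / ε) * N) := by
        refine exp_le_exp.2 ?_
        have hpos : 0 ≤ 7 * √ε * N := by positivity
        nlinarith [mul_le_mul_of_nonneg_left hlog hpos]
    _ = 2 ^ (7 * √ε * logb 2 (1 / ε) * N) := by
        rw [rpow_def_of_pos two_pos, logb]
        field_simp

/-- There exist absolute constants `c > 0` and `ε₀ > 0` such that for every
`ε ∈ (0, ε₀)` and infinitely many block lengths `N`, there is a binary code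
`C ⊆ {0,1}^N` with `|C| ≥ 2^{(1 - c √ε log₂(1/ε)) N}` that can be corrected from an `ε`
fraction of worst-case deletions: every binary string of length `⌈(1-ε)N⌉` is a
subsequence of at most one codeword of `C`. -/
theorem high_rate_binary_deletion_codes :
    ∃ c : ℝ, 0 < c ∧ ∃ ε₀ : ℝ, 0 < ε₀ ∧
      ∀ ε : ℝ, 0 < ε → ε < ε₀ →
        {N : ℕ | ∃ C : Finset (Fin N → Fin 2),
          (2 : ℝ) ^ ((1 - c * Real.sqrt ε * Real.logb 2 (1 / ε)) * N) ≤ C.card ∧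
          ∀ s : Fin (⌈(1 - ε) * N⌉₊) → Fin 2, ∀ u ∈ C, ∀ v ∈ C,
            IsSubseq s u → IsSubseq s v → u = v}.Infinite := by
  refine ⟨7, by norm_num, exp (-1), exp_pos _, fun ε hε hε₀ => ?_⟩
  convert Set.infinite_univ (α := ℕ)
  refine Set.eq_univ_of_forall fun N => ?_
  set ℓ := ⌈(1 - ε) * N⌉₊
  have hℓN : ℓ ≤ N := Nat.ceil_le.2 (by nlinarith [N.cast_nonneg (α := ℝ)])
  have hk : ((N - ℓ : ℕ) : ℝ) ≤ ε * N := by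
    rw [Nat.cast_sub hℓN]
    linarith [Nat.le_ceil ((1 - ε) * N)]
  obtain ⟨C, hC, hcard⟩ := exists_deletion_code (α := Fin 2) hℓN
  refine ⟨C, ?_, hC⟩
  have hred := choose_sq_mul_two_pow_le_two_rpow hε hε₀ (N.sub_le ℓ) hk
  rw [Nat.choose_symm hℓN] at hred
  have hpos : (0 : ℝ) < N.choose ℓ ^ 2 * 2 ^ (N - ℓ) := by
    have := N.choose_pos hℓN
    positivity
  calc (2 : ℝ) ^ ((1 - 7 * √ε * logb 2 (1 / ε)) * N)
      = 2 ^ N / 2 ^ (7 * √ε * logb 2 (1 / ε) * N) := by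
        rw [sub_mul, one_mul, rpow_sub two_pos, rpow_natCast]
    _ ≤ 2 ^ N / (N.choose ℓ ^ 2 * 2 ^ (N - ℓ)) := by gcongr
    _ ≤ #C := by
        rw [div_le_iff₀ hpos]
        exact_mod_cast hcard
end

section
/- There exist absolute constants c > 0, C' > 0 and m₀ such that for every ε with 0 < ε < 1/2 and every m ≥ m₀, there exists a code C ⊆ {0,1}^m with |C| ≥ 2^{c·ε²·m} that is (1/2 − ε, L) list-decodable from deletions with list size L ≤ C'/ε². (Special case of Theorem 5.2 of the paper: constant-rate binary codes list-decodable from a 1/2 − ε fraction of deletions with list size O(1/ε²).) -/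
open Finset Real
open scoped Classical

theorem IsSubseq.tail_tail {α : Type*} {ℓ m : ℕ} {s : Fin (ℓ + 1) → α} {u : Fin (m + 1) → α}
    (h : IsSubseq s u) : IsSubseq (Fin.tail s) (Fin.tail u) := by
  obtain ⟨f, hf, hfs⟩ := h
  have hne : ∀ j : Fin ℓ, f j.succ ≠ 0 := fun j =>
    ((Fin.zero_le _).trans_lt (hf (Fin.succ_pos j))).ne'
  refine ⟨fun j => (f j.succ).pred (hne j),
    Fin.strictMono_pred_comp hne (hf.comp Fin.strictMono_succ), fun j => ?_⟩
  simpa [Fin.tail] using hfs j.succ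

theorem IsSubseq.tail_of_head_ne {α : Type*} {ℓ m : ℕ} {s : Fin (ℓ + 1) → α}
    {u : Fin (m + 1) → α} (h : IsSubseq s u) (hne : u 0 ≠ s 0) : IsSubseq s (Fin.tail u) := by
  obtain ⟨f, hf, hfs⟩ := h
  have hf0 : f 0 ≠ 0 := fun h0 => hne (by rw [← hfs 0, h0])
  have hne' : ∀ j, f j ≠ 0 := fun j =>
    ((Fin.pos_iff_ne_zero.2 hf0).trans_le (hf.monotone (Fin.zero_le j))).ne'
  refine ⟨fun j => (f j).pred (hne' j), Fin.strictMono_pred_comp hne' hf, fun j => ?_⟩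
  simpa [Fin.tail] using hfs j

theorem sum_range_choose_succ (m k : ℕ) :
    ∑ i ∈ range k, (m + 1).choose i =
      ∑ i ∈ range k, m.choose i + ∑ i ∈ range (k - 1), m.choose i := by
  cases k with
  | zero => simp
  | succ k =>
    rw [sum_range_succ', sum_range_succ' (fun i => m.choose i)]
    simp only [Nat.choose_succ_succ, sum_add_distrib, Nat.choose_zero_right, Nat.add_sub_cancel]
    ring

theorem card_isSubseq_succ_le {ℓ m : ℕ} (s : Fin (ℓ + 1) → Fin 2) :
    #{u : Fin (m + 1) → Fin 2 | IsSubseq s u} ≤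
      #{v : Fin m → Fin 2 | IsSubseq (Fin.tail s) v} + #{v : Fin m → Fin 2 | IsSubseq s v} := by
  have hcover : ({u | IsSubseq s u} : Finset (Fin (m + 1) → Fin 2)) ⊆
      ({v | IsSubseq (Fin.tail s) v} : Finset (Fin m → Fin 2)).image (Fin.cons (s 0)) ∪
      ({v | IsSubseq s v} : Finset (Fin m → Fin 2)).image (Fin.cons (s 0 + 1)) := by
    intro u hu
    simp only [mem_filter, mem_univ, true_and] at hu
    rw [← Fin.cons_self_tail u]
    by_cases h0 : u 0 = s 0
    · rw [h0]
      exact mem_union_left _ (mem_image_of_mem _ (mem_filter.2 ⟨mem_univ _, hu.tail_tail⟩))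
    · have h1 : u 0 = s 0 + 1 := by omega
      rw [h1]
      exact mem_union_right _
        (mem_image_of_mem _ (mem_filter.2 ⟨mem_univ _, hu.tail_of_head_ne h0⟩))
  exact (card_le_card hcover).trans
    ((card_union_le _ _).trans (add_le_add card_image_le card_image_le))

-- `m + 1 - ℓ` truncates to `0` exactly when `ℓ > m`, where there are no supersequences.
theorem card_isSubseq_le {ℓ : ℕ} (m : ℕ) (s : Fin ℓ → Fin 2) :
    #{u : Fin m → Fin 2 | IsSubseq s u} ≤ ∑ i ∈ range (m + 1 - ℓ), m.choose i := by
  induction m generalizing ℓ with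
  | zero =>
    cases ℓ with
    | zero => exact (card_filter_le _ _).trans (by simp)
    | succ ℓ =>
      simp only [Nat.sub_eq_zero_of_le (Nat.le_add_left 1 ℓ), range_zero, sum_empty,
        Nat.le_zero, card_eq_zero, filter_eq_empty_iff]
      rintro u - ⟨f, -⟩
      exact (f 0).elim0
  | succ m ih =>
    cases ℓ with
    | zero =>
      calc _ ≤ #(univ : Finset (Fin (m + 1) → Fin 2)) := card_filter_le _ _
        _ = _ := by simp [Nat.sum_range_choose]
    | succ ℓ =>
      calc _ ≤ _ := card_isSubseq_succ_le s
        _ ≤ _ := add_le_add (ih _) (ih _)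
        _ = _ := by
          rw [sum_range_choose_succ, show m + 1 + 1 - (ℓ + 1) = m + 1 - ℓ by omega,
            show m + 1 - ℓ - 1 = m + 1 - (ℓ + 1) by omega]

theorem Nat.cast_choose_mul_pow_sub {K : Type*} [Field K] {x : K} (hx : x ≠ 0) {j k : ℕ}
    (hjk : j ≤ k) (N : ℕ) : (N.choose k : K) * x ^ (N - j) = N.choose k * (x ^ N / x ^ j) := by
  rcases lt_or_ge N k with hN | hN
  · simp [Nat.choose_eq_zero_of_lt hN]
  · rw [pow_sub₀ x hx (hjk.trans hN), div_eq_mul_inv]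

section Counting

variable {X : Type*} [Fintype X] [DecidableEq X]

theorem card_filter_lt_card_filter_mem_le (B : Finset X) (N L : ℕ) :
    #{t : Fin N → X | L < #{i | t i ∈ B}} ≤
      N.choose (L + 1) * #B ^ (L + 1) * Fintype.card X ^ (N - (L + 1)) := by
  have hcover : ({t | L < #{i | t i ∈ B}} : Finset (Fin N → X)) ⊆
      (powersetCard (L + 1) univ).biUnion
        fun K => Fintype.piFinset (K.piecewise (fun _ => B) fun _ => univ) := by
    intro t ht
    obtain ⟨K, hK, hKcard⟩ := exists_subset_card_eq (mem_filter.1 ht).2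
    refine mem_biUnion.2 ⟨K, mem_powersetCard.2 ⟨subset_univ K, hKcard⟩, ?_⟩
    refine Fintype.mem_piFinset.2 fun i => ?_
    by_cases hi : i ∈ K
    · simpa [hi] using hK hi
    · simp [hi]
  calc _ ≤ _ := card_le_card hcover
    _ ≤ _ := card_biUnion_le
    _ = _ := by
      rw [sum_congr rfl fun K hK => ?_, sum_const, card_powersetCard, card_univ, Fintype.card_fin,
        smul_eq_mul, mul_assoc]
      rw [Fintype.card_piFinset]
      simp only [Finset.piecewise]
      rw [prod_apply_ite, filter_mem_eq_inter, univ_inter, filter_not, filter_mem_eq_inter,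
        univ_inter, ← compl_eq_univ_sdiff, prod_const, prod_const, card_compl, card_univ,
        Fintype.card_fin, (mem_powersetCard.1 hK).2]

theorem card_not_injective_le (N : ℕ) :
    #{t : Fin N → X | ¬Function.Injective t} ≤ N.choose 2 * Fintype.card X ^ (N - 1) := by
  have hcover : ({t | ¬Function.Injective t} : Finset (Fin N → X)) ⊆
      univ.biUnion fun x => {t | 1 < #{i | t i ∈ ({x} : Finset X)}} := by
    intro t ht
    obtain ⟨a, b, hab, hne⟩ := Function.not_injective_iff.1 (mem_filter.1 ht).2
    refine mem_biUnion.2 ⟨t a, mem_univ _, mem_filter.2 ⟨mem_univ _, ?_⟩⟩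
    calc 1 < #{a, b} := by rw [card_pair hne]; norm_num
      _ ≤ _ := card_le_card (by intro i; aesop)
  calc _ ≤ _ := card_le_card hcover
    _ ≤ _ := card_biUnion_le
    _ ≤ ∑ _x : X, N.choose 2 * Fintype.card X ^ (N - 2) := sum_le_sum fun x _ => by
      simpa using card_filter_lt_card_filter_mem_le {x} N 1
    _ = _ := by
      rw [sum_const, card_univ, smul_eq_mul]
      rcases lt_or_ge N 2 with hN | hN
      · simp [Nat.choose_eq_zero_of_lt hN]
      · rw [mul_left_comm, ← pow_succ', show N - 2 + 1 = N - 1 by omega]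

theorem exists_card_eq_forall_card_inter_le [Nonempty X] {ι : Type*} [Fintype ι]
    (B : ι → Finset X) {b N L : ℕ} (hB : ∀ j, #(B j) ≤ b)
    (h : (Fintype.card ι : ℝ) * N.choose (L + 1) * (b / Fintype.card X) ^ (L + 1) +
      N.choose 2 / Fintype.card X < 1) :
    ∃ C : Finset X, #C = N ∧ ∀ j, #(C ∩ B j) ≤ L := by
  let bad : Finset (Fin N → X) := ({t | ¬Function.Injective t} : Finset _) ∪
    univ.biUnion fun j => ({t | L < #{i | t i ∈ B j}} : Finset _)
  have hbad : #bad ≤ N.choose 2 * Fintype.card X ^ (N - 1) +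
      Fintype.card ι * (N.choose (L + 1) * b ^ (L + 1) * Fintype.card X ^ (N - (L + 1))) := by
    refine (card_union_le _ _).trans (add_le_add (card_not_injective_le N) ?_)
    refine card_biUnion_le.trans ?_
    rw [← smul_eq_mul, ← card_univ, ← sum_const]
    refine sum_le_sum fun j _ => (card_filter_lt_card_filter_mem_le (B j) N L).trans ?_
    gcongr
    exact hB j
  have hlt : #bad < #(univ : Finset (Fin N → X)) := by
    set q : ℝ := (Fintype.card X : ℝ)
    have hq : 0 < q := by positivity
    rw [← Nat.cast_lt (α := ℝ)]
    refine (Nat.cast_le.2 hbad).trans_lt ?_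
    simp only [card_univ, Fintype.card_fun, Fintype.card_fin]
    push_cast
    have hq0 : q ≠ 0 := hq.ne'
    calc _ = (Fintype.card ι * N.choose (L + 1) * (b / q) ^ (L + 1) + N.choose 2 / q) * q ^ N := by
          rw [Nat.cast_choose_mul_pow_sub hq0 (by norm_num : 1 ≤ 2), mul_right_comm _ _ (q ^ _),
            Nat.cast_choose_mul_pow_sub hq0 le_rfl, div_pow]
          ring
      _ < 1 * q ^ N := by gcongr
      _ = _ := one_mul _
  obtain ⟨t, -, ht⟩ := exists_mem_notMem_of_card_lt_card hlt
  simp only [bad, mem_union, mem_filter, mem_univ, true_and, mem_biUnion, not_or, not_not,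
    not_exists, not_lt] at ht
  refine ⟨univ.map ⟨t, ht.1⟩, by simp, fun j => ?_⟩
  rw [← filter_mem_eq_inter, filter_map, card_map]
  exact ht.2 j

end Counting

theorem sum_range_choose_mul_pow_le {x : ℝ} (hx0 : 0 ≤ x) (hx1 : x ≤ 1) {m d : ℕ} (hdm : d ≤ m) :
    (∑ i ∈ range (d + 1), (m.choose i : ℝ)) * x ^ d ≤ (1 + x) ^ m :=
  calc _ ≤ ∑ i ∈ range (d + 1), (m.choose i : ℝ) * x ^ i := by
        rw [sum_mul]
        refine sum_le_sum fun i hi => mul_le_mul_of_nonneg_left ?_ (Nat.cast_nonneg _)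
        exact pow_le_pow_of_le_one hx0 hx1 (Nat.lt_succ_iff.1 (mem_range.1 hi))
    _ ≤ ∑ i ∈ range (m + 1), (m.choose i : ℝ) * x ^ i := by
        gcongr
    _ = (1 + x) ^ m := by
        rw [add_comm 1 x, add_pow]
        simp only [one_pow, mul_one, mul_comm]

theorem one_add_exp_neg_le (a : ℝ) : 1 + exp (-a) ≤ 2 * exp (a ^ 2 / 8 - a / 2) :=
  calc 1 + exp (-a) = 2 * exp (-(a / 2)) * cosh (a / 2) := by
        rw [cosh_eq]
        field_simp
        rw [mul_add, ← exp_add, ← exp_add]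
        ring_nf
        rw [exp_zero, add_comm]
    _ ≤ 2 * exp (-(a / 2)) * exp ((a / 2) ^ 2 / 2) := by gcongr; exact cosh_le_exp_half_sq _
    _ = 2 * exp (a ^ 2 / 8 - a / 2) := by rw [mul_assoc, ← exp_add]; ring_nf

theorem sum_range_choose_le_two_pow_mul_exp {ε : ℝ} (hε : 0 ≤ ε) {m d : ℕ}
    (hd : (d : ℝ) ≤ (1 / 2 - ε) * m) :
    ∑ i ∈ range (d + 1), (m.choose i : ℝ) ≤ 2 ^ m * exp (-(2 * ε ^ 2 * m)) := by
  have hdm : (d : ℝ) ≤ m := hd.trans (by nlinarith [m.cast_nonneg (α := ℝ)])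
  have hx := sum_range_choose_mul_pow_le (exp_pos (-(4 * ε))).le
    (exp_le_one_iff.2 (by linarith)) (by exact_mod_cast hdm)
  rw [← exp_nat_mul, ← le_div_iff₀ (exp_pos _)] at hx
  refine hx.trans ?_
  calc _ ≤ (2 * exp ((4 * ε) ^ 2 / 8 - 4 * ε / 2)) ^ m / exp (d * -(4 * ε)) := by
        gcongr
        exact one_add_exp_neg_le _
    _ = 2 ^ m * exp (m * ((4 * ε) ^ 2 / 8 - 4 * ε / 2) - d * -(4 * ε)) := by
        rw [mul_pow, ← exp_nat_mul, mul_div_assoc, exp_sub]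
    _ ≤ _ := by gcongr; nlinarith

section Estimates

variable {ε : ℝ} {m : ℕ}

theorem two_pow_mul_choose_mul_pow_le (hε0 : 0 < ε) (hε1 : ε < 1 / 2) {ℓ N L : ℕ} (hℓ : ℓ ≤ m)
    {p : ℝ} (hp0 : 0 ≤ p) (hp : p ≤ exp (-(2 * ε ^ 2 * m)))
    (hN : (N : ℝ) ≤ 2 * exp (ε ^ 2 * m / 2)) (hL : 2 / ε ^ 2 ≤ L) :
    (2 : ℝ) ^ ℓ * N.choose (L + 1) * p ^ (L + 1) ≤ exp (-m) := by
  rcases le_or_gt N L with hNL | hLN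
  · rw [Nat.choose_eq_zero_of_lt (Nat.lt_succ_of_le hNL)]
    simp only [Nat.cast_zero, mul_zero, zero_mul]
    positivity
  set β := ε ^ 2 * m
  have hε2 : ε ^ 2 < 1 / 4 := by nlinarith
  have hL8 : 8 < (L : ℝ) := hL.trans_lt' (by rw [lt_div_iff₀ (by positivity)]; linarith)
  have hβ2 : 2 ≤ exp (β / 2) := by
    have : (L : ℝ) < N := by exact_mod_cast hLN
    linarith
  have hNp : N * p ≤ exp (-β) :=
    calc N * p ≤ exp (β / 2) * exp (β / 2) * exp (-(2 * β)) := by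
          gcongr ?_ * ?_
          · nlinarith [exp_pos (β / 2)]
          · exact hp.trans_eq (by rw [mul_assoc])
      _ = exp (-β) := by rw [← exp_add, ← exp_add]; ring_nf
  have hβL : 2 * (m : ℝ) ≤ β * L := by
    have := (div_le_iff₀ (by positivity)).1 hL
    nlinarith [m.cast_nonneg (α := ℝ)]
  calc (2 : ℝ) ^ ℓ * N.choose (L + 1) * p ^ (L + 1)
        ≤ exp 1 ^ m * ((N : ℝ) ^ (L + 1) * p ^ (L + 1)) := by
        rw [mul_assoc]
        gcongr
        · exact (pow_le_pow_right₀ one_le_two hℓ).trans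
            (pow_le_pow_left₀ zero_le_two (by linarith [add_one_le_exp 1]) m)
        · exact_mod_cast Nat.choose_le_pow N (L + 1)
    _ ≤ exp m * exp (-β) ^ (L + 1) := by
        rw [exp_one_pow, ← mul_pow]
        gcongr
    _ = exp (m - β * (L + 1)) := by rw [← exp_nat_mul, ← exp_add]; push_cast; ring_nf
    _ ≤ exp (-m) := by gcongr; nlinarith

theorem choose_two_div_two_pow_lt (hε0 : 0 ≤ ε) (hε1 : ε < 1 / 2) (hm : 32 ≤ m) {N : ℕ}
    (hN : (N : ℝ) ≤ 2 * exp (ε ^ 2 * m / 2)) : (N.choose 2 : ℝ) / 2 ^ m < 1 / 2 := by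
  have hm' : (32 : ℝ) ≤ m := by exact_mod_cast hm
  have hexp : exp (m / 2) ≤ 2 ^ m := by
    rw [div_eq_mul_one_div, exp_nat_mul]
    exact pow_le_pow_left₀ (exp_pos _).le
      ((le_log_iff_exp_le two_pos).1 (by linarith [log_two_gt_d9])) m
  have h8 : 8 < exp (m / 4) := by linarith [add_one_le_exp (m / 4)]
  rw [div_lt_iff₀ (by positivity)]
  calc (N.choose 2 : ℝ) ≤ N ^ 2 := by exact_mod_cast Nat.choose_le_pow N 2
    _ ≤ (2 * exp (m / 4 / 2)) ^ 2 := by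
        gcongr
        have : ε ^ 2 ≤ 1 / 4 := by nlinarith
        exact hN.trans (by gcongr; nlinarith)
    _ = 4 * exp (m / 4) := by rw [mul_pow, ← exp_nat_mul]; ring_nf
    _ < 1 / 2 * exp (m / 2) := by
        rw [show (m : ℝ) / 2 = m / 4 + m / 4 by ring, exp_add]
        nlinarith [exp_pos (m / 4 : ℝ)]
    _ ≤ 1 / 2 * 2 ^ m := by gcongr

theorem union_bound_lt_one (hε0 : 0 < ε) (hε1 : ε < 1 / 2) (hm : 32 ≤ m) {ℓ N L : ℕ}
    (hℓ : (1 / 2 + ε) * m ≤ ℓ) (hℓm : ℓ ≤ m) (hN : (N : ℝ) ≤ 2 * exp (ε ^ 2 * m / 2))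
    (hL : 2 / ε ^ 2 ≤ L) :
    (2 : ℝ) ^ ℓ * N.choose (L + 1) *
        (((∑ i ∈ range (m + 1 - ℓ), m.choose i : ℕ) : ℝ) / 2 ^ m) ^ (L + 1) +
      N.choose 2 / 2 ^ m < 1 := by
  have hd : ((m - ℓ : ℕ) : ℝ) ≤ (1 / 2 - ε) * m := by
    rw [Nat.cast_sub hℓm]
    linarith
  have hp : ((∑ i ∈ range (m + 1 - ℓ), m.choose i : ℕ) : ℝ) / 2 ^ m ≤
      exp (-(2 * ε ^ 2 * m)) := by
    rw [div_le_iff₀' (by positivity), Nat.sub_add_comm hℓm]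
    push_cast
    exact sum_range_choose_le_two_pow_mul_exp hε0.le hd
  have hexp : exp (-(m : ℝ)) < 1 / 2 := by
    rw [exp_neg, inv_lt_comm₀ (exp_pos _) one_half_pos]
    have hm' : (32 : ℝ) ≤ m := by exact_mod_cast hm
    linarith [add_one_le_exp (m : ℝ)]
  linarith [two_pow_mul_choose_mul_pow_le hε0 hε1 hℓm (by positivity) hp hN hL,
    choose_two_div_two_pow_lt hε0.le hε1 hm hN]

end Estimates

/-- There exist absolute constants `c > 0`, `C' > 0` and `m₀` such that for every
`ε ∈ (0, 1/2)` and every `m ≥ m₀`, there exists a code `C ⊆ {0,1}^m` with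
`|C| ≥ 2^{c ε² m}` that is `(1/2 - ε, L)` list-decodable from deletions — every binary
string of length `⌈(1/2+ε)m⌉` is a subsequence of at most `L` codewords — with list size
`L ≤ C'/ε²`. -/
theorem constant_rate_list_decodable :
    ∃ c : ℝ, 0 < c ∧ ∃ C' : ℝ, 0 < C' ∧ ∃ m₀ : ℕ,
      ∀ ε : ℝ, 0 < ε → ε < 1 / 2 → ∀ m : ℕ, m₀ ≤ m →
        ∃ C : Finset (Fin m → Fin 2), ∃ L : ℕ,
          (2 : ℝ) ^ (c * ε ^ 2 * m) ≤ C.card ∧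
          (L : ℝ) ≤ C' / ε ^ 2 ∧
          ∀ s : Fin (⌈(1 / 2 + ε) * m⌉₊) → Fin 2,
            {u | u ∈ C ∧ IsSubseq s u}.ncard ≤ L := by
  refine ⟨1 / 2, by norm_num, 4, by norm_num, 32, fun ε hε0 hε1 m hm => ?_⟩
  have hℓm : ⌈(1 / 2 + ε) * m⌉₊ ≤ m := Nat.ceil_le.2 (by nlinarith [m.cast_nonneg (α := ℝ)])
  have hN : 2⁻¹ ≤ exp (ε ^ 2 * m / 2) := by
    linarith [one_le_exp (by positivity : 0 ≤ ε ^ 2 * m / 2)]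
  obtain ⟨C, hC, hCL⟩ := exists_card_eq_forall_card_inter_le
    (fun s : Fin ⌈(1 / 2 + ε) * m⌉₊ → Fin 2 => ({u | IsSubseq s u} : Finset (Fin m → Fin 2)))
    (N := ⌈exp (ε ^ 2 * m / 2)⌉₊) (L := ⌈2 / ε ^ 2⌉₊) (card_isSubseq_le m) (by
      simp only [Fintype.card_fun, Fintype.card_fin, Nat.cast_pow, Nat.cast_ofNat]
      exact union_bound_lt_one hε0 hε1 hm (Nat.le_ceil _) hℓm
        (Nat.ceil_le_two_mul hN) (Nat.le_ceil _))
  refine ⟨C, ⌈2 / ε ^ 2⌉₊, ?_, ?_, fun s => ?_⟩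
  · rw [hC, rpow_def_of_pos two_pos]
    refine (exp_le_exp.2 ?_).trans (Nat.le_ceil _)
    nlinarith [log_two_lt_d9, (by positivity : 0 ≤ ε ^ 2 * m)]
  · refine (Nat.ceil_le_two_mul ?_).trans_eq (by ring)
    rw [le_div_iff₀ (by positivity)]
    nlinarith
  · rw [← coe_filter, Set.ncard_coe_finset]
    convert hCL s using 2
    ext u
    simp
end

section
/- Let δ ∈ (0,1/2) and let m be a positive integer such that δm is a positive integer. Then there exists a code C ⊆ {0,1}^m with |C| ≥ 2^{(1 − 2h(δ))m}/(2δm) such that every two distinct codewords of C have longest common subsequence of length less than (1−δ)m; equivalently, C can be corrected from a δ fraction of worst-case deletions. (Theorem 2.4 of the paper, binary case: rate 1 − 2h(δ) − log(δm)/m, up to an additive O(1/m) in the rate.) -/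
/-- The binary entropy function `h(x) = x log₂(1/x) + (1-x) log₂(1/(1-x))`. -/
noncomputable def binEnt (x : ℝ) : ℝ :=
  x * Real.logb 2 (1 / x) + (1 - x) * Real.logb 2 (1 / (1 - x))

/-!
Call two words confusable when they share a subsequence of length `m - d`. A word has at most
`C(m, d)` subsequences of that length, and a binary string of length `m - d` has exactly
`S = ∑_{i ≤ d} C(m, i)` supersequences of length `m`, so each word is confusable with at most
`S²` words. Picking words greedily and discarding everything confusable with them gives a code of
size at least `2^m / S²`, and the Chernoff-type bound `S ≤ 2^{h(δ) m}` finishes the proof.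
-/

open Finset

section Subsequence

variable {α : Type*} {ℓ m : ℕ}

instance [DecidableEq α] (s : Fin ℓ → α) (t : Fin m → α) : Decidable (IsSubseq s t) :=
  inferInstanceAs (Decidable (∃ f : Fin ℓ → Fin m, StrictMono f ∧ ∀ j, t (f j) = s j))

theorem isSubseq_of_fin_zero (s : Fin 0 → α) (t : Fin m → α) : IsSubseq s t :=
  ⟨Fin.elim0, fun a => a.elim0, fun j => j.elim0⟩

theorem not_isSubseq_fin_zero (s : Fin (ℓ + 1) → α) (t : Fin 0 → α) : ¬IsSubseq s t :=
  fun ⟨f, _, _⟩ => (f 0).elim0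

theorem isSubseq_comp_castLE (h : ℓ ≤ m) (t : Fin m → α) : IsSubseq (t ∘ Fin.castLE h) t :=
  ⟨Fin.castLE h, Fin.strictMono_castLE h, fun _ => rfl⟩

theorem IsSubseq.tail {s : Fin (ℓ + 1) → α} {t : Fin m → α} (h : IsSubseq s t) :
    IsSubseq (Fin.tail s) t :=
  let ⟨f, hf, hft⟩ := h
  ⟨f ∘ Fin.succ, hf.comp (Fin.strictMono_succ), fun j => hft j.succ⟩

theorem isSubseq_cons_iff {s : Fin (ℓ + 1) → α} {a : α} {w : Fin m → α} :
    IsSubseq s (Fin.cons a w) ↔ (s 0 = a ∧ IsSubseq (Fin.tail s) w) ∨ IsSubseq s w := by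
  constructor
  · rintro ⟨f, hf, hfs⟩
    by_cases h0 : f 0 = 0
    · have hpos : ∀ j : Fin ℓ, f j.succ ≠ 0 := fun j => h0 ▸ (hf (Fin.succ_pos j)).ne'
      refine Or.inl ⟨by simpa [h0] using (hfs 0).symm, fun j => (f j.succ).pred (hpos j),
        fun i j hij => ?_, fun j => ?_⟩
      · simpa [Fin.pred_lt_pred_iff] using hf (Fin.succ_lt_succ_iff.2 hij)
      · rw [Fin.tail, ← hfs j.succ, ← Fin.succ_pred (f j.succ) (hpos j)]
        rfl
    · have hpos : ∀ j, f j ≠ 0 := fun j =>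
        ((Fin.pos_iff_ne_zero.2 h0).trans_le (hf.monotone (Fin.zero_le j))).ne'
      refine Or.inr ⟨fun j => (f j).pred (hpos j), fun i j hij => ?_, fun j => ?_⟩
      · simpa [Fin.pred_lt_pred_iff] using hf hij
      · rw [← hfs j, ← Fin.succ_pred (f j) (hpos j)]
        rfl
  · rintro (⟨rfl, g, hg, hgs⟩ | ⟨g, hg, hgs⟩)
    · refine ⟨Fin.cons 0 (Fin.succ ∘ g), Fin.strictMono_cons.2
        ⟨fun j => Fin.succ_pos _, Fin.strictMono_succ.comp hg⟩, fun j => ?_⟩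
      cases j using Fin.cases with
      | zero => rfl
      | succ j => exact hgs j
    · exact ⟨Fin.succ ∘ g, Fin.strictMono_succ.comp hg, fun j => by simpa using hgs j⟩

theorem isSubseq_cons_head_iff {s : Fin (ℓ + 1) → α} {w : Fin m → α} :
    IsSubseq s (Fin.cons (s 0) w) ↔ IsSubseq (Fin.tail s) w := by
  simpa [isSubseq_cons_iff] using IsSubseq.tail

theorem isSubseq_cons_iff_of_ne {s : Fin (ℓ + 1) → α} {a : α} {w : Fin m → α} (h : s 0 ≠ a) :
    IsSubseq s (Fin.cons a w) ↔ IsSubseq s w := by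
  simp [isSubseq_cons_iff, h]

end Subsequence

theorem sum_range_choose_succ_mul_pow (c m k : ℕ) :
    ∑ i ∈ range (k + 1), (m + 1).choose i * c ^ i =
      ∑ i ∈ range (k + 1), m.choose i * c ^ i + c * ∑ i ∈ range k, m.choose i * c ^ i := by
  induction k with
  | zero => simp
  | succ k ih =>
    rw [sum_range_succ, ih, sum_range_succ _ (k + 1), sum_range_succ _ k, Nat.choose_succ_succ']
    ring

section Counting

variable {α : Type*} [Fintype α] {ℓ m : ℕ}

theorem card_filter_fin_succ_eq_sum (p : (Fin (m + 1) → α) → Prop) [DecidablePred p] :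
    #{v : Fin (m + 1) → α | p v} = ∑ a, #{w : Fin m → α | p (Fin.cons a w)} := by
  simp only [card_filter]
  rw [← Fintype.sum_prod_type']
  exact (Fintype.sum_equiv (Fin.consEquiv fun _ => α) _ _ fun _ => rfl).symm

variable [DecidableEq α]

theorem card_subsequences_le_choose (u : Fin m → α) :
    #{s : Fin ℓ → α | IsSubseq s u} ≤ m.choose ℓ := by
  induction m generalizing ℓ with
  | zero =>
    cases ℓ with
    | zero => exact (card_filter_le _ _).trans (by simp)
    | succ ℓ => simp [not_isSubseq_fin_zero]
  | succ m ih =>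
    cases ℓ with
    | zero => exact (card_filter_le _ _).trans (by simp)
    | succ ℓ =>
      obtain ⟨a, w, rfl⟩ : ∃ a w, u = Fin.cons a w := ⟨_, _, (Fin.cons_self_tail u).symm⟩
      have hsub : ({s | IsSubseq s (Fin.cons a w)} : Finset (Fin (ℓ + 1) → α)) ⊆
          ({s | IsSubseq s w} : Finset (Fin (ℓ + 1) → α)) ∪
            image (Fin.cons a) ({s | IsSubseq s w} : Finset (Fin ℓ → α)) := by
        intro s hs
        rw [mem_filter, isSubseq_cons_iff] at hs
        rcases hs.2 with ⟨hs0, htail⟩ | hs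
        · exact mem_union_right _
            (mem_image.2 ⟨_, by simpa using htail, hs0 ▸ Fin.cons_self_tail s⟩)
        · exact mem_union_left _ (by simpa using hs)
      calc _ ≤ _ := card_le_card hsub
        _ ≤ _ := card_union_le _ _
        _ ≤ m.choose (ℓ + 1) + m.choose ℓ := add_le_add (ih _) (card_image_le.trans (ih _))
        _ = (m + 1).choose (ℓ + 1) := by rw [Nat.choose_succ_succ', add_comm]

variable [Nonempty α]

/-- Prepending a letter `a` to `w` helps to embed `s` only when `a = s 0`, which gives a
Pascal-type recursion in which `s` plays no role. -/
theorem card_supersequences_eq (s : Fin ℓ → α) :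
    #{v : Fin m → α | IsSubseq s v} =
      ∑ i ∈ range (m + 1 - ℓ), m.choose i * (Fintype.card α - 1) ^ i := by
  set c := Fintype.card α - 1
  induction m generalizing ℓ with
  | zero =>
    cases ℓ with
    | zero => simp [isSubseq_of_fin_zero]
    | succ ℓ => simp [not_isSubseq_fin_zero]
  | succ m ih =>
    cases ℓ with
    | zero =>
      have hq : c + 1 = Fintype.card α := Nat.sub_add_cancel Fintype.card_pos
      simp [isSubseq_of_fin_zero, ← hq, add_pow, mul_comm]
    | succ ℓ =>
      have hsplit : #{v : Fin (m + 1) → α | IsSubseq s v} =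
          #{w : Fin m → α | IsSubseq (Fin.tail s) w} + c * #{w : Fin m → α | IsSubseq s w} := by
        rw [card_filter_fin_succ_eq_sum, ← add_sum_erase _ _ (mem_univ (s 0))]
        simp_rw [isSubseq_cons_head_iff]
        rw [sum_congr rfl fun a ha => congrArg card <|
            filter_congr fun w _ => isSubseq_cons_iff_of_ne (ne_of_mem_erase ha).symm,
          sum_const, card_erase_of_mem (mem_univ _), card_univ, smul_eq_mul]
      rw [hsplit, ih, ih]
      rcases le_or_gt ℓ m with h | h
      · obtain ⟨k, rfl⟩ := Nat.exists_eq_add_of_le h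
        rw [show ℓ + k + 1 + 1 - (ℓ + 1) = k + 1 by omega, show ℓ + k + 1 - ℓ = k + 1 by omega,
          show ℓ + k + 1 - (ℓ + 1) = k by omega, sum_range_choose_succ_mul_pow]
      · rw [show m + 1 + 1 - (ℓ + 1) = 0 by omega, show m + 1 - ℓ = 0 by omega,
          show m + 1 - (ℓ + 1) = 0 by omega]
        simp

theorem card_common_subsequence_le (u : Fin m → α) :
    #{v : Fin m → α | ∃ s : Fin ℓ → α, IsSubseq s u ∧ IsSubseq s v} ≤
      m.choose ℓ * ∑ i ∈ range (m + 1 - ℓ), m.choose i * (Fintype.card α - 1) ^ i := by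
  calc _ ≤ #(({s : Fin ℓ → α | IsSubseq s u} : Finset _).biUnion
          fun s => {v : Fin m → α | IsSubseq s v}) := by
        refine card_le_card fun v hv => ?_
        obtain ⟨s, hsu, hsv⟩ := (mem_filter.1 hv).2
        exact mem_biUnion.2 ⟨s, by simpa using hsu, by simpa using hsv⟩
    _ ≤ _ := card_biUnion_le_card_mul _ _ _ fun s _ => (card_supersequences_eq s).le
    _ ≤ _ := Nat.mul_le_mul_right _ (card_subsequences_le_choose u)

end Counting

theorem card_binary_common_subsequence_le {m d : ℕ} (hdm : d ≤ m) (u : Fin m → Fin 2) :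
    #{v : Fin m → Fin 2 | ∃ s : Fin (m - d) → Fin 2, IsSubseq s u ∧ IsSubseq s v} ≤
      (∑ i ∈ range (d + 1), m.choose i) ^ 2 := by
  have hchoose : m.choose (m - d) ≤ ∑ i ∈ range (d + 1), m.choose i := by
    rw [Nat.choose_symm hdm]
    exact single_le_sum (fun i _ => Nat.zero_le _) (self_mem_range_succ d)
  have hcommon := card_common_subsequence_le (ℓ := m - d) u
  rw [show m + 1 - (m - d) = d + 1 by omega] at hcommon
  simpa [sq] using hcommon.trans (Nat.mul_le_mul_right _ hchoose)

theorem Finset.exists_pairwise_not_rel_card_le_mul {α : Type*} [DecidableEq α] {r : α → α → Prop}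
    [DecidableRel r] (hsymm : ∀ u v, r u v → r v u) (hrefl : ∀ u, r u u) {D : ℕ} (s : Finset α)
    (hD : ∀ u ∈ s, #{v ∈ s | r u v} ≤ D) :
    ∃ t ⊆ s, (t : Set α).Pairwise (fun u v => ¬r u v) ∧ #s ≤ #t * D := by
  induction s using Finset.strongInduction with
  | H s ih =>
  rcases s.eq_empty_or_nonempty with rfl | ⟨u, hu⟩
  · exact ⟨∅, Subset.rfl, by simp, by simp⟩
  set N := {v ∈ s | r u v}
  have huN : u ∈ N := mem_filter.2 ⟨hu, hrefl u⟩
  obtain ⟨t, hts, ht, hcard⟩ := ih (s \ N) (sdiff_ssubset (filter_subset _ _) ⟨u, huN⟩)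
    fun v hv => (card_le_card (filter_subset_filter _ sdiff_subset)).trans
      (hD v (mem_sdiff.1 hv).1)
  have hfar : ∀ v ∈ t, ¬r u v := fun v hv h =>
    (mem_sdiff.1 (hts hv)).2 (mem_filter.2 ⟨(mem_sdiff.1 (hts hv)).1, h⟩)
  refine ⟨insert u t, insert_subset hu (hts.trans sdiff_subset), ?_, ?_⟩
  · rw [coe_insert]
    exact ht.insert fun v hv _ => ⟨hfar v hv, fun h => hfar v hv (hsymm v u h)⟩
  · calc #s = #(s \ N) + #N := (card_sdiff_add_card_eq_card (filter_subset _ _)).symm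
      _ ≤ #t * D + D := add_le_add hcard (hD u hu)
      _ = #(insert u t) * D := by
        rw [card_insert_of_notMem fun h => hfar u h (hrefl u), add_one_mul]

theorem sum_range_choose_mul_pow_le_one {δ : ℝ} (hδ0 : 0 < δ) (hδ : δ ≤ 1 / 2) {m d : ℕ}
    (hdm : d ≤ m) :
    (∑ i ∈ range (d + 1), (m.choose i : ℝ)) * (δ ^ d * (1 - δ) ^ (m - d)) ≤ 1 := by
  have h1δ : 0 ≤ 1 - δ := by linarith
  have hterm : ∀ i ≤ d, δ ^ d * (1 - δ) ^ (m - d) ≤ δ ^ i * (1 - δ) ^ (m - i) := by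
    intro i hi
    obtain ⟨j, rfl⟩ := Nat.exists_eq_add_of_le hi
    have hδj : δ ^ j ≤ (1 - δ) ^ j := pow_le_pow_left₀ hδ0.le (by linarith) j
    rw [show m - i = j + (m - (i + j)) by omega, pow_add, pow_add, mul_assoc]
    exact mul_le_mul_of_nonneg_left (mul_le_mul_of_nonneg_right hδj (pow_nonneg h1δ _))
      (pow_nonneg hδ0.le _)
  calc _ = ∑ i ∈ range (d + 1), (m.choose i : ℝ) * (δ ^ d * (1 - δ) ^ (m - d)) := sum_mul ..
    _ ≤ ∑ i ∈ range (d + 1), δ ^ i * (1 - δ) ^ (m - i) * m.choose i :=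
        sum_le_sum fun i hi => by
          rw [mul_comm]
          exact mul_le_mul_of_nonneg_right (hterm i (Nat.lt_succ_iff.1 (mem_range.1 hi)))
            (Nat.cast_nonneg _)
    _ ≤ ∑ i ∈ range (m + 1), δ ^ i * (1 - δ) ^ (m - i) * m.choose i :=
        sum_le_sum_of_subset_of_nonneg (range_subset_range.2 (by omega)) fun i _ _ => by
          positivity
    _ = 1 := by rw [← add_pow]; simp

theorem two_rpow_binEnt_mul {δ : ℝ} (hδ0 : 0 < δ) (hδ1 : δ < 1) {m d : ℕ}
    (hdm : (d : ℝ) = δ * m) (hd : d ≤ m) :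
    (2 : ℝ) ^ (binEnt δ * m) = (δ ^ d * (1 - δ) ^ (m - d))⁻¹ := by
  have hexp : binEnt δ * m =
      Real.logb 2 (1 / δ) * d + Real.logb 2 (1 / (1 - δ)) * (m - d : ℕ) := by
    rw [binEnt, Nat.cast_sub hd, hdm]
    ring
  rw [hexp, Real.rpow_add two_pos, Real.rpow_mul zero_le_two, Real.rpow_mul zero_le_two,
    Real.rpow_logb two_pos (by norm_num) (by positivity),
    Real.rpow_logb two_pos (by norm_num) (by positivity), Real.rpow_natCast, Real.rpow_natCast]
  simp [mul_comm]

theorem sum_range_choose_le_two_rpow_binEnt_mul {δ : ℝ} (hδ0 : 0 < δ) (hδ : δ ≤ 1 / 2)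
    {m d : ℕ} (hdm : (d : ℝ) = δ * m) (hd : d ≤ m) :
    (∑ i ∈ range (d + 1), (m.choose i : ℝ)) ≤ 2 ^ (binEnt δ * m) := by
  have h1δ : 0 < 1 - δ := by linarith
  rw [two_rpow_binEnt_mul hδ0 (by linarith) hdm hd, ← one_div, le_div_iff₀ (by positivity)]
  exact sum_range_choose_mul_pow_le_one hδ0 hδ hd

theorem greedy_binary_deletion_codes_general (δ : ℝ) (hδ0 : 0 < δ) (hδ1 : δ < 1 / 2)
    (m d : ℕ) (hd : 0 < d) (hdm : (d : ℝ) = δ * m) :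
    ∃ C : Finset (Fin m → Fin 2),
      (2 : ℝ) ^ ((1 - 2 * binEnt δ) * m) / (2 * δ * m) ≤ C.card ∧
      ∀ u ∈ C, ∀ v ∈ C, u ≠ v →
        ¬∃ s : Fin (⌈(1 - δ) * m⌉₊) → Fin 2, IsSubseq s u ∧ IsSubseq s v := by
  have hdm' : d ≤ m := by
    have : (d : ℝ) ≤ m := by rw [hdm]; nlinarith [(m.cast_nonneg : (0 : ℝ) ≤ m)]
    exact_mod_cast this
  rw [show ⌈(1 - δ) * m⌉₊ = m - d by
    rw [show (1 - δ) * m = ((m - d : ℕ) : ℝ) by rw [Nat.cast_sub hdm', hdm]; ring]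
    exact Nat.ceil_natCast _]
  set S := ∑ i ∈ range (d + 1), m.choose i
  obtain ⟨C, -, hC, hcard⟩ := (univ : Finset (Fin m → Fin 2)).exists_pairwise_not_rel_card_le_mul
    (r := fun u v => ∃ s : Fin (m - d) → Fin 2, IsSubseq s u ∧ IsSubseq s v)
    (fun u v ⟨s, hu, hv⟩ => ⟨s, hv, hu⟩)
    (fun u => ⟨_, isSubseq_comp_castLE (m.sub_le d) u, isSubseq_comp_castLE (m.sub_le d) u⟩)
    fun u _ => card_binary_common_subsequence_le hdm' u
  refine ⟨C, ?_, fun u hu v hv huv => hC hu hv huv⟩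
  have hS : (S : ℝ) ≤ 2 ^ (binEnt δ * m) := by
    exact_mod_cast sum_range_choose_le_two_rpow_binEnt_mul hδ0 hδ1.le hdm hdm'
  have hSpos : (0 : ℝ) < S := by
    exact_mod_cast sum_pos' (fun _ _ => Nat.zero_le _) ⟨0, by simp, by simp⟩
  have h2m : (2 : ℝ) ^ m ≤ #C * S ^ 2 := by exact_mod_cast (by simpa using hcard)
  calc (2 : ℝ) ^ ((1 - 2 * binEnt δ) * m) / (2 * δ * m)
      ≤ (2 : ℝ) ^ ((1 - 2 * binEnt δ) * m) :=
        div_le_self (by positivity) (by rw [mul_assoc, ← hdm]; exact_mod_cast (by omega))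
    _ = 2 ^ m / (2 ^ (binEnt δ * m)) ^ 2 := by
        rw [← Real.rpow_natCast, ← Real.rpow_natCast, ← Real.rpow_mul zero_le_two,
          ← Real.rpow_sub two_pos]
        ring_nf
    _ ≤ 2 ^ m / S ^ 2 := by gcongr
    _ ≤ #C := div_le_of_le_mul₀ (by positivity) (Nat.cast_nonneg _) h2m

/-- Let `δ ∈ (0, 1/2)` and let `m ≥ 1` with `δm` a positive integer. Then there exists a
code `C ⊆ {0,1}^m` with `|C| ≥ 2^{(1 - 2h(δ))m}/(2δm)` such that every two distinct
codewords of `C` have longest common subsequence of length less than `(1-δ)m`, i.e., no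
string of length `⌈(1-δ)m⌉` is a common subsequence of two distinct codewords. -/
theorem greedy_binary_deletion_codes (δ : ℝ) (hδ0 : 0 < δ) (hδ1 : δ < 1 / 2)
    (m d : ℕ) (hm : 0 < m) (hd : 0 < d) (hdm : (d : ℝ) = δ * m) :
    ∃ C : Finset (Fin m → Fin 2),
      (2 : ℝ) ^ ((1 - 2 * binEnt δ) * m) / (2 * δ * m) ≤ C.card ∧
      ∀ u ∈ C, ∀ v ∈ C, u ≠ v →
        ¬∃ s : Fin (⌈(1 - δ) * m⌉₊) → Fin 2, IsSubseq s u ∧ IsSubseq s v :=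
  greedy_binary_deletion_codes_general δ hδ0 hδ1 m d hd hdm
end

section
/- Let ℓ, m be positive integers with m/2 < ℓ ≤ m. Then Σ_{t=ℓ}^{m} C(t−1, ℓ−1)·2^{m−t} ≤ (m − ℓ + 1)·C(m−1, ℓ−1), where C(a,b) denotes the binomial coefficient. Consequently, for any fixed string s ∈ {0,1}^ℓ, the number of strings s' ∈ {0,1}^m containing s as a subsequence is at most (m − ℓ + 1)·C(m−1, ℓ−1). (Binary estimate of Lemma 2.3 of the paper, with hypotheses made precise: the terms C(t−1,ℓ−1)·2^{m−t} are nondecreasing in t when ℓ > m/2, so the sum is bounded by the number of terms times the last term.) -/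
lemma choose_two_mul_le (a b : ℕ) (hb : b ≤ 2*a+1) :
    Nat.choose b (a+1) * 2 ≤ Nat.choose (b+1) (a+1) := by
  rw [Nat.choose_succ_succ]
  have h1 := Nat.choose_succ_right_eq b a
  have h2 : Nat.choose b (a+1) ≤ Nat.choose b a := by
    have : Nat.choose b (a+1) * (a+1) ≤ Nat.choose b a * (a+1) := by
      rw [h1]; exact Nat.mul_le_mul_left _ (by omega)
    exact Nat.le_of_mul_le_mul_right this (by omega)
  simp only [Nat.succ_eq_add_one] at *
  omega

lemma term_le (ℓ m : ℕ) (hℓ : 0 < ℓ) (h2 : m < 2*ℓ) :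
    ∀ d t, t + d = m → ℓ ≤ t → (t-1).choose (ℓ-1) * 2^d ≤ (m-1).choose (ℓ-1) := by
  intro d
  induction d with
  | zero => intro t ht _; simp [show t = m by omega]
  | succ d ih =>
    intro t ht hℓt
    have hℓ2 : 2 ≤ ℓ := by omega
    obtain ⟨a, rfl⟩ : ∃ a, ℓ = a + 2 := ⟨ℓ - 2, by omega⟩
    obtain ⟨b, rfl⟩ : ∃ b, t = b + 1 := ⟨t - 1, by omega⟩
    have key : (b + 1 - 1).choose (a + 2 - 1) * 2 ≤ (b+1).choose (a+1) := by
      simpa using choose_two_mul_le a b (by omega)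
    calc (b + 1 - 1).choose (a + 2 - 1) * 2 ^ (d+1)
        = ((b + 1 - 1).choose (a + 2 - 1) * 2) * 2 ^ d := by ring
      _ ≤ (b+1).choose (a+1) * 2 ^ d := Nat.mul_le_mul_right _ key
      _ = ((b + 2) - 1).choose (a + 2 - 1) * 2 ^ d := by norm_num
      _ ≤ _ := ih (b+2) (by omega) (by omega)

lemma part1 (ℓ m : ℕ) (hℓ : 0 < ℓ) (hℓm : ℓ ≤ m) (h2 : m < 2 * ℓ) :
    ∑ t ∈ Finset.Icc ℓ m, (t - 1).choose (ℓ - 1) * 2 ^ (m - t) ≤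
      (m - ℓ + 1) * (m - 1).choose (ℓ - 1) := by
  have h := Finset.sum_le_card_nsmul (Finset.Icc ℓ m)
    (fun t => (t - 1).choose (ℓ - 1) * 2 ^ (m - t)) ((m - 1).choose (ℓ - 1))
    (fun t ht => by
      rw [Finset.mem_Icc] at ht
      exact term_le ℓ m hℓ h2 (m - t) t (by omega) ht.1)
  rwa [Nat.card_Icc, smul_eq_mul, show m + 1 - ℓ = m - ℓ + 1 by omega] at h


def Bnd (ℓ m : ℕ) : ℕ :=
  if ℓ = 0 then 2 ^ m else ∑ t ∈ Finset.Icc ℓ m, (t - 1).choose (ℓ - 1) * 2 ^ (m - t)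

lemma Bnd_rec (k m : ℕ) : Bnd (k+1) (m+1) = Bnd k m + Bnd (k+1) m := by
  have hre : ∑ t ∈ Finset.Icc (k+1) (m+1), (t - 1).choose k * 2 ^ (m + 1 - t)
      = ∑ t ∈ Finset.Icc k m, t.choose k * 2 ^ (m - t) := by
    rw [show Finset.Icc (k+1) (m+1) = Finset.map (addLeftEmbedding 1) (Finset.Icc k m) by
      rw [Finset.map_add_left_Icc, Nat.add_comm 1 k, Nat.add_comm 1 m]]
    rw [Finset.sum_map]
    refine Finset.sum_congr rfl fun t ht => ?_
    simp only [addLeftEmbedding_apply]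
    congr 1
    · congr 1; omega
    · congr 1; omega
  rw [Bnd, if_neg (Nat.succ_ne_zero k), show (k+1)-1 = k from rfl, hre]
  match k with
  | 0 =>
    simp only [zero_add, Nat.choose_zero_right, one_mul]
    rw [Bnd, if_pos rfl, Bnd, if_neg one_ne_zero]
    rw [← Finset.Ioc_insert_left (Nat.zero_le m), Finset.sum_insert (by simp)]
    simp [← Finset.Icc_add_one_left_eq_Ioc]
  | k+1 =>
    rcases lt_or_ge m (k+1) with hm | hm
    · have e1 : Finset.Icc (k+1) m = ∅ := Finset.Icc_eq_empty (by omega)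
      have e2 : Finset.Icc (k+1+1) m = ∅ := Finset.Icc_eq_empty (by omega)
      simp [Bnd, e1, e2]
    · have hsplit : ∀ t ∈ Finset.Icc (k+1) m, t.choose (k+1) * 2^(m-t)
          = (t-1).choose k * 2^(m-t) + (t-1).choose (k+1) * 2^(m-t) := by
        intro t ht; rw [Finset.mem_Icc] at ht
        obtain ⟨u, rfl⟩ : ∃ u, t = u+1 := ⟨t-1, by omega⟩
        rw [Nat.choose_succ_succ]; simp [add_mul]
      have hB1 : Bnd (k+1) m = ∑ t ∈ Finset.Icc (k+1) m, (t-1).choose k * 2^(m-t) := by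
        rw [Bnd, if_neg (by omega)]
        rfl
      have hB2 : Bnd (k+1+1) m = ∑ t ∈ Finset.Icc (k+1) m, (t-1).choose (k+1) * 2^(m-t) := by
        rw [Bnd, if_neg (by omega),
          show Finset.Icc (k+1) m = insert (k+1) (Finset.Ioc (k+1) m) from
            (Finset.Ioc_insert_left hm).symm,
          Finset.sum_insert (by simp),
          show (k+1-1).choose (k+1) = 0 from Nat.choose_eq_zero_of_lt (by omega)]
        simp [← Finset.Icc_add_one_left_eq_Ioc]
      rw [Finset.sum_congr rfl hsplit, Finset.sum_add_distrib, hB1, hB2]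

lemma fin2_other : ∀ a b : Fin 2, b ≠ a → b = (if a = 0 then 1 else 0) := by decide

lemma shift_embed {k m : ℕ} (f : Fin k → Fin (m+1)) (hf : StrictMono f)
    (hpos : ∀ j, 1 ≤ (f j).val) :
    ∃ g : Fin k → Fin m, StrictMono g ∧ ∀ j, Fin.succ (g j) = f j := by
  refine ⟨fun j => ⟨(f j).val - 1, by have := (f j).isLt; have := hpos j; omega⟩, ?_, ?_⟩
  · intro a b hab
    have h1 := hf hab
    have := hpos a
    simp only [Fin.lt_def] at h1 ⊢
    omega
  · intro j
    apply Fin.ext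
    simp only [Fin.val_succ]
    have := hpos j
    omega

set_option maxHeartbeats 1000000 in
def consF {m : ℕ} (c : Fin 2) (u : Fin m → Fin 2) : Fin (m+1) → Fin 2 := Fin.cons c u

lemma consF_inj {m : ℕ} (c : Fin 2) : Function.Injective (consF (m := m) c) := by
  intro u v h
  have : ∀ j : Fin m, u j = v j := by
    intro j
    have := congrFun h j.succ
    simpa [consF] using this
  funext j; exact this j

lemma consF_self_tail {m : ℕ} (s' : Fin (m+1) → Fin 2) : consF (s' 0) (Fin.tail s') = s' :=
  Fin.cons_self_tail s'

lemma count_le : ∀ (m ℓ : ℕ) (s : Fin ℓ → Fin 2),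
    {s' : Fin m → Fin 2 | IsSubseq s s'}.ncard ≤ Bnd ℓ m := by
  intro m
  induction m with
  | zero =>
    intro ℓ s
    match ℓ, s with
    | 0, s =>
      have : {s' : Fin 0 → Fin 2 | IsSubseq s s'}.ncard ≤ (Set.univ : Set (Fin 0 → Fin 2)).ncard :=
        Set.ncard_le_ncard (Set.subset_univ _) (Set.toFinite _)
      rw [Set.ncard_univ, Nat.card_eq_fintype_card] at this
      simpa [Bnd] using this
    | (k+1), s =>
      have : {s' : Fin 0 → Fin 2 | IsSubseq s s'} = ∅ := by
        ext s'; simp only [Set.mem_setOf_eq, Set.mem_empty_iff_false, iff_false]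
        rintro ⟨f, -, -⟩
        exact (f 0).elim0
      simp [this]
  | succ m ih =>
    intro ℓ s
    match ℓ, s with
    | 0, s =>
      have : {s' : Fin (m+1) → Fin 2 | IsSubseq s s'}.ncard
          ≤ (Set.univ : Set (Fin (m+1) → Fin 2)).ncard :=
        Set.ncard_le_ncard (Set.subset_univ _) (Set.toFinite _)
      rw [Set.ncard_univ, Nat.card_eq_fintype_card] at this
      simpa [Bnd] using this
    | (k+1), s =>
      set A : Set (Fin m → Fin 2) := {u | IsSubseq (Fin.tail s) u} with hA
      set B2 : Set (Fin m → Fin 2) := {u | IsSubseq s u} with hB2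
      set c : Fin 2 := if s 0 = 0 then 1 else 0 with hc
      have key : {s' : Fin (m+1) → Fin 2 | IsSubseq s s'} ⊆
          (consF (s 0) '' A) ∪ (consF c '' B2) := by
        rintro s' ⟨f, hf, hfs⟩
        by_cases h0 : s' 0 = s 0
        · left
          refine ⟨Fin.tail s', ?_, ?_⟩
          · have hf' : StrictMono (f ∘ Fin.succ) :=
              hf.comp (Fin.strictMono_succ)
            have hpos : ∀ j : Fin k, 1 ≤ ((f ∘ Fin.succ) j).val := by
              intro j
              exact lt_of_le_of_lt (Nat.zero_le _) (hf (Fin.succ_pos j))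
            obtain ⟨g, hg, hgs⟩ := shift_embed (f ∘ Fin.succ) hf' hpos
            refine ⟨g, hg, fun j => ?_⟩
            show s' (Fin.succ (g j)) = s (Fin.succ j)
            rw [hgs]
            exact hfs j.succ
          · rw [← h0]; exact consF_self_tail s'
        · right
          refine ⟨Fin.tail s', ?_, ?_⟩
          · have hpos : ∀ j : Fin (k+1), 1 ≤ (f j).val := by
              intro j
              have h1 : f 0 ≤ f j := hf.monotone (Fin.zero_le j)
              have h2 : (f 0).val ≠ 0 := by
                intro hz
                apply h0
                rw [← hfs 0]
                congr 1
                exact (Fin.ext hz).symm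
              simp only [Fin.le_def] at h1
              omega
            obtain ⟨g, hg, hgs⟩ := shift_embed f hf hpos
            refine ⟨g, hg, fun j => ?_⟩
            show s' (Fin.succ (g j)) = s j
            rw [hgs]
            exact hfs j
          · rw [show c = s' 0 from (fin2_other (s 0) (s' 0) h0).symm]; exact consF_self_tail s'
      calc {s' : Fin (m+1) → Fin 2 | IsSubseq s s'}.ncard
          ≤ ((consF (s 0) '' A) ∪ (consF c '' B2)).ncard :=
            Set.ncard_le_ncard key (Set.toFinite _)
        _ ≤ (consF (s 0) '' A).ncard + (consF c '' B2).ncard := Set.ncard_union_le _ _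
        _ = A.ncard + B2.ncard := by
            rw [Set.ncard_image_of_injective _ (consF_inj _),
              Set.ncard_image_of_injective _ (consF_inj _)]
        _ ≤ Bnd k m + Bnd (k+1) m := Nat.add_le_add (ih k (Fin.tail s)) (ih (k+1) s)
        _ = Bnd (k+1) (m+1) := (Bnd_rec k m).symm

/-- Let `ℓ, m` be positive integers with `m/2 < ℓ ≤ m`. Then
`Σ_{t=ℓ}^{m} C(t-1, ℓ-1) 2^{m-t} ≤ (m - ℓ + 1) C(m-1, ℓ-1)`; consequently, for any fixed
`s ∈ {0,1}^ℓ`, the number of strings `s' ∈ {0,1}^m` containing `s` as a subsequence is at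
most `(m - ℓ + 1) C(m-1, ℓ-1)`. -/
theorem count_superstrings_binary (ℓ m : ℕ) (hℓ : 0 < ℓ) (hℓm : ℓ ≤ m)
    (h2 : m < 2 * ℓ) :
    (∑ t ∈ Finset.Icc ℓ m, (t - 1).choose (ℓ - 1) * 2 ^ (m - t) ≤
        (m - ℓ + 1) * (m - 1).choose (ℓ - 1)) ∧
      ∀ s : Fin ℓ → Fin 2,
        {s' : Fin m → Fin 2 | IsSubseq s s'}.ncard ≤
          (m - ℓ + 1) * (m - 1).choose (ℓ - 1) := by
  have hp1 := part1 ℓ m hℓ hℓm h2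
  refine ⟨hp1, fun s => ?_⟩
  calc {s' : Fin m → Fin 2 | IsSubseq s s'}.ncard ≤ Bnd ℓ m := count_le m ℓ s
    _ = ∑ t ∈ Finset.Icc ℓ m, (t - 1).choose (ℓ - 1) * 2 ^ (m - t) := by
        rw [Bnd, if_neg (by omega)]
    _ ≤ (m - ℓ + 1) * (m - 1).choose (ℓ - 1) := hp1
end

section
/- Let k ≥ 2, let ℓ, m be positive integers with ℓ ≤ m, and fix a string u ∈ [k]^m. The number of strings v ∈ [k]^m whose longest common subsequence with u has length at least ℓ is at most C(m, ℓ)²·k^{m−ℓ}, where C(a,b) denotes the binomial coefficient. (Key counting step in the proof of Theorem 2.4 of the paper: u has at most C(m,ℓ) subsequences of length ℓ, and each is contained in at most k^{m−ℓ}·C(m,ℓ) strings of [k]^m.) -/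
theorem IsSubseq.exists_finset {α : Type*} {ℓ m : ℕ} {s : Fin ℓ → α} {t : Fin m → α}
    (h : IsSubseq s t) :
    ∃ A : {A : Finset (Fin m) // A.card = ℓ}, ∀ j, t (A.1.orderEmbOfFin A.2 j) = s j := by
  obtain ⟨f, hf, hts⟩ := h
  have hcard : (Finset.univ.image f).card = ℓ := by
    rw [Finset.card_image_of_injective _ hf.injective, Finset.card_univ, Fintype.card_fin]
  refine ⟨⟨_, hcard⟩, fun j => ?_⟩
  have hmem (j : Fin ℓ) : f j ∈ Finset.univ.image f :=
    Finset.mem_image_of_mem f (Finset.mem_univ j)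
  rw [← Finset.orderEmbOfFin_unique hcard hmem hf]
  exact hts j

theorem ncard_setOf_apply_embedding_eq_le {ι α β : Type*} [Fintype ι] [Fintype α] [Fintype β]
    (g : ι ↪ α) (w : ι → β) :
    {v : α → β | ∀ i, v (g i) = w i}.ncard ≤
      Fintype.card β ^ (Fintype.card α - Fintype.card ι) := by
  classical
  let restrict (v : α → β) : {a // a ∉ Set.range g} → β := fun a => v a
  have hinj : Set.InjOn restrict {v : α → β | ∀ i, v (g i) = w i} := by
    intro v₁ hv₁ v₂ hv₂ heq
    funext a
    by_cases ha : a ∈ Set.range g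
    · obtain ⟨i, rfl⟩ := ha
      rw [hv₁ i, hv₂ i]
    · exact congrFun heq ⟨a, ha⟩
  calc {v : α → β | ∀ i, v (g i) = w i}.ncard
      ≤ (Set.univ : Set ({a // a ∉ Set.range g} → β)).ncard :=
        Set.ncard_le_ncard_of_injOn restrict (fun _ _ => Set.mem_univ _) hinj
    _ = Fintype.card β ^ (Fintype.card α - Fintype.card ι) := by
        rw [Set.ncard_univ, Nat.card_eq_fintype_card, Fintype.card_fun,
          Fintype.card_subtype_compl, Fintype.card_range]

theorem count_large_lcs_general (k ℓ m : ℕ)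
    (u : Fin m → Fin k) :
    {v : Fin m → Fin k | ∃ s : Fin ℓ → Fin k, IsSubseq s u ∧ IsSubseq s v}.ncard ≤
      m.choose ℓ ^ 2 * k ^ (m - ℓ) := by
  let T := {A : Finset (Fin m) // A.card = ℓ}
  let cover (p : T × T) : Set (Fin m → Fin k) :=
    {v | ∀ j, v (p.2.1.orderEmbOfFin p.2.2 j) = u (p.1.1.orderEmbOfFin p.1.2 j)}
  have hsub : {v : Fin m → Fin k | ∃ s : Fin ℓ → Fin k, IsSubseq s u ∧ IsSubseq s v} ⊆
      ⋃ p, cover p := by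
    rintro v ⟨s, hu, hv⟩
    obtain ⟨A, hA⟩ := hu.exists_finset
    obtain ⟨B, hB⟩ := hv.exists_finset
    exact Set.mem_iUnion.2 ⟨(A, B), fun j => (hB j).trans (hA j).symm⟩
  have hcover (p : T × T) : (cover p).ncard ≤ k ^ (m - ℓ) := by
    simpa using ncard_setOf_apply_embedding_eq_le (p.2.1.orderEmbOfFin p.2.2).toEmbedding
      (fun j => u (p.1.1.orderEmbOfFin p.1.2 j))
  calc _ ≤ (⋃ p, cover p).ncard := Set.ncard_le_ncard hsub
    _ ≤ ∑ p, (cover p).ncard := Set.ncard_iUnion_le_of_fintype cover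
    _ ≤ ∑ _p : T × T, k ^ (m - ℓ) := Finset.sum_le_sum fun p _ => hcover p
    _ = m.choose ℓ ^ 2 * k ^ (m - ℓ) := by
        simp [T, Fintype.card_finset_len, sq]

/-- Let `k ≥ 2`, `1 ≤ ℓ ≤ m`, and fix `u ∈ [k]^m`. The number of strings `v ∈ [k]^m`
whose longest common subsequence with `u` has length at least `ℓ` (i.e., such that some
string of length `ℓ` is a common subsequence of `u` and `v`) is at most
`C(m, ℓ)² k^{m-ℓ}`. -/
theorem count_large_lcs (k ℓ m : ℕ) (hk : 2 ≤ k) (hℓ : 0 < ℓ) (hℓm : ℓ ≤ m)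
    (u : Fin m → Fin k) :
    {v : Fin m → Fin k | ∃ s : Fin ℓ → Fin k, IsSubseq s u ∧ IsSubseq s v}.ncard ≤
      m.choose ℓ ^ 2 * k ^ (m - ℓ) :=
  count_large_lcs_general k ℓ m u
end
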